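/- Let μ* ∈ 𝒫(X) be the unique fixed point of the mean-field equilibrium operator H and set π* := f_{μ*}. Let ε > 0, let π_ε : X → U be a policy with sup_{x∈X} ‖π_ε(x) − π*(x)‖₁ ≤ ε, and let μ_ε ∈ 𝒫(X) be an invariant distribution for π_ε, i.e., μ_ε(·) = ∑_{x∈X} P(·|x,π_ε(x),μ_ε) μ_ε(x). Then ‖μ_ε − μ*‖₁ ≤ K1 ε / (1 − C1), where C1 := 3K1/2 + K1 K_{H1}/(2ρ). (Key estimate in the proof of Theorem 1.) -/

import Mathlib

/-!
Both invariance equations say that a distribution is fixed by the one-step map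
`ν ↦ ∑ₓ P(·|x, π(x), μ) ν(x)`, so `‖μ_ε - μ*‖₁` splits along the three arguments of that map:
changing the policy costs `K1 ε`, changing the mean field costs `K1 ‖μ_ε - μ*‖₁`, and changing the
propagated distribution costs `(K1 + K1 L) / 2 · ‖μ_ε - μ*‖₁` by Dobrushin's contraction estimate,
where `L` bounds `‖π*(x) - π*(x')‖₁`. Solving this linear inequality gives the bound.

For `L ≤ K_{H1} / ρ`, write `Q*(x, u) = ⟨c_x, u⟩ - Ω(u)`. The coefficients `c_x` move by at most
`L1 + (β K1 / 2) S` in `x`, where `S` is the oscillation of the value function, and the same bound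
holds for `S` itself; hence `S` and the variation of `c_x` are at most `L1 / (1 - β K1 / 2)`.
Strong convexity of `Ω` makes the regularized argmax `(1/ρ)`-Lipschitz in the coefficients.
-/

namespace MFG

open Finset

def IsProb {E : Type*} [Fintype E] (μ : E → ℝ) : Prop :=
  (∀ e, 0 ≤ μ e) ∧ ∑ e, μ e = 1

def l1 {E : Type*} [Fintype E] (μ ν : E → ℝ) : ℝ :=
  ∑ e, |μ e - ν e|

def ind {E : Type*} [DecidableEq E] (x y : E) : ℝ :=
  if x = y then 0 else 1

def RewardLip {X A : Type*} [Fintype X] [Fintype A] [DecidableEq X] [DecidableEq A]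
    (r : X → A → (X → ℝ) → ℝ) (L1 : ℝ) : Prop :=
  ∀ x x' a a' μ μ', IsProb μ → IsProb μ' →
    |r x a μ - r x' a' μ'| ≤ L1 * (ind x x' + 2 * ind a a' + l1 μ μ')

def KernelLip {X A : Type*} [Fintype X] [Fintype A] [DecidableEq X] [DecidableEq A]
    (p : X → A → (X → ℝ) → X → ℝ) (K1 : ℝ) : Prop :=
  ∀ x x' a a' μ μ', IsProb μ → IsProb μ' →
    l1 (p x a μ) (p x' a' μ') ≤ K1 * (ind x x' + 2 * ind a a' + l1 μ μ')

def IsKernel {X A : Type*} [Fintype X] [Fintype A]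
    (p : X → A → (X → ℝ) → X → ℝ) : Prop :=
  ∀ x a μ, IsProb μ → IsProb (p x a μ)

def RewardNonneg {X A : Type*} [Fintype X] [Fintype A]
    (r : X → A → (X → ℝ) → ℝ) : Prop :=
  ∀ x a μ, IsProb μ → 0 ≤ r x a μ

def OmegaLip {A : Type*} [Fintype A] (Ω : (A → ℝ) → ℝ) (Lreg : ℝ) : Prop :=
  ∀ u v, IsProb u → IsProb v → |Ω u - Ω v| ≤ Lreg * l1 u v

def StrongConvex {A : Type*} [Fintype A] (Ω : (A → ℝ) → ℝ)
    (DΩ : (A → ℝ) → (A → ℝ)) (ρ : ℝ) : Prop :=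
  ∀ u v, IsProb u → IsProb v →
    Ω u + (∑ a, DΩ u a * (v a - u a)) + ρ / 2 * (l1 u v) ^ 2 ≤ Ω v

noncomputable def Tbell {X A : Type*} [Fintype X] [Fintype A]
    (r : X → A → (X → ℝ) → ℝ) (p : X → A → (X → ℝ) → X → ℝ)
    (Ω : (A → ℝ) → ℝ) (β : ℝ) (μ : X → ℝ) (v : X → ℝ) (x : X) : ℝ :=
  ⨆ u : {w : A → ℝ // IsProb w},
    ((∑ a, r x a μ * u.1 a) - Ω u.1 + β * ∑ y, v y * (∑ a, p x a μ y * u.1 a))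

noncomputable def Qmax {X A : Type*} [Fintype A] (Q : X → (A → ℝ) → ℝ) (y : X) : ℝ :=
  ⨆ u : {w : A → ℝ // IsProb w}, Q y u.1

noncomputable def Lbell {X A : Type*} [Fintype X] [Fintype A]
    (r : X → A → (X → ℝ) → ℝ) (p : X → A → (X → ℝ) → X → ℝ)
    (Ω : (A → ℝ) → ℝ) (β : ℝ) (μ : X → ℝ) (Q : X → (A → ℝ) → ℝ)
    (x : X) (u : A → ℝ) : ℝ :=
  (∑ a, r x a μ * u a) - Ω u + β * ∑ y, Qmax Q y * (∑ a, p x a μ y * u a)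

def BddFixedPoint {X A : Type*} [Fintype X] [Fintype A]
    (r : X → A → (X → ℝ) → ℝ) (p : X → A → (X → ℝ) → X → ℝ)
    (Ω : (A → ℝ) → ℝ) (β : ℝ) (μ : X → ℝ) (Q : X → (A → ℝ) → ℝ) : Prop :=
  (∃ C, ∀ x u, IsProb u → |Q x u| ≤ C) ∧
  (∀ x u, IsProb u → Q x u = Lbell r p Ω β μ Q x u)

open Filter Topology

section L1

variable {E : Type*} [Fintype E]

lemma l1_nonneg (μ ν : E → ℝ) : 0 ≤ l1 μ ν := sum_nonneg fun _ _ => abs_nonneg _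

@[simp] lemma l1_self (μ : E → ℝ) : l1 μ μ = 0 := by simp [l1]

lemma l1_comm (μ ν : E → ℝ) : l1 μ ν = l1 ν μ := by simp only [l1, abs_sub_comm]

lemma l1_triangle (μ ν η : E → ℝ) : l1 μ η ≤ l1 μ ν + l1 ν η := by
  rw [l1, l1, l1, ← sum_add_distrib]
  exact sum_le_sum fun e _ => abs_sub_le _ _ _

lemma IsProb.nonempty {μ : E → ℝ} (hμ : IsProb μ) : Nonempty E := by
  by_contra h
  rw [not_nonempty_iff] at h
  simpa using hμ.2

lemma IsProb.sum_sub_eq_zero {μ ν : E → ℝ} (hμ : IsProb μ) (hν : IsProb ν) :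
    ∑ e, (μ e - ν e) = 0 := by
  rw [sum_sub_distrib, hμ.2, hν.2, sub_self]

lemma IsProb.convexComb {μ ν : E → ℝ} (hμ : IsProb μ) (hν : IsProb ν) {t : ℝ} (ht0 : 0 ≤ t)
    (ht1 : t ≤ 1) : IsProb fun e => (1 - t) * μ e + t * ν e := by
  refine ⟨fun e => add_nonneg (mul_nonneg (sub_nonneg.2 ht1) (hμ.1 e)) (mul_nonneg ht0 (hν.1 e)),
    ?_⟩
  rw [sum_add_distrib, ← mul_sum, ← mul_sum, hμ.2, hν.2]
  ring

lemma abs_sum_mul_le_of_sub_le {v Δ : E → ℝ} {K : ℝ} (hv : ∀ e e', v e - v e' ≤ 2 * K)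
    (hΔ : ∑ e, Δ e = 0) : |∑ e, v e * Δ e| ≤ K * ∑ e, |Δ e| := by
  rcases isEmpty_or_nonempty E with hE | hE
  · simp
  obtain ⟨emax, -, hmax⟩ := exists_max_image univ v univ_nonempty
  obtain ⟨emin, -, hmin⟩ := exists_min_image univ v univ_nonempty
  set m := (v emax + v emin) / 2 with hm_def
  have hm : ∀ e, |v e - m| ≤ K := fun e => abs_le.2
    ⟨by linarith [hmin e (mem_univ e), hv emax emin],
      by linarith [hmax e (mem_univ e), hv emax emin]⟩
  have hcenter : ∑ e, v e * Δ e = ∑ e, (v e - m) * Δ e := by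
    simp only [sub_mul, sum_sub_distrib, ← mul_sum, hΔ, mul_zero, sub_zero]
  calc |∑ e, v e * Δ e| = |∑ e, (v e - m) * Δ e| := by rw [hcenter]
    _ ≤ ∑ e, |v e - m| * |Δ e| := (abs_sum_le_sum_abs _ _).trans_eq (by simp only [abs_mul])
    _ ≤ ∑ e, K * |Δ e| := sum_le_sum fun e _ => mul_le_mul_of_nonneg_right (hm e) (abs_nonneg _)
    _ = K * ∑ e, |Δ e| := (mul_sum ..).symm

variable {F : Type*} [Fintype F]

lemma l1_mixture_le {q q' : E → F → ℝ} {w : E → ℝ} {M : ℝ} (hw : IsProb w)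
    (hq : ∀ e, l1 (q e) (q' e) ≤ M) :
    l1 (fun y => ∑ e, q e y * w e) (fun y => ∑ e, q' e y * w e) ≤ M := by
  calc l1 (fun y => ∑ e, q e y * w e) (fun y => ∑ e, q' e y * w e)
      ≤ ∑ y, ∑ e, |q e y - q' e y| * w e := by
        refine sum_le_sum fun y _ => ?_
        rw [← sum_sub_distrib]
        refine (abs_sum_le_sum_abs _ _).trans_eq (sum_congr rfl fun e _ => ?_)
        rw [← sub_mul, abs_mul, abs_of_nonneg (hw.1 e)]
    _ = ∑ e, l1 (q e) (q' e) * w e := by rw [sum_comm]; simp only [l1, sum_mul]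
    _ ≤ ∑ e, M * w e := sum_le_sum fun e _ => mul_le_mul_of_nonneg_right (hq e) (hw.1 e)
    _ = M := by rw [← mul_sum, hw.2, mul_one]

/-- Dobrushin's contraction estimate. -/
lemma l1_mixture_le_mul_l1 {q : E → F → ℝ} {w w' : E → ℝ} {K : ℝ}
    (hq : ∀ e e', l1 (q e) (q e') ≤ 2 * K) (hw : ∑ e, w e = ∑ e, w' e) :
    l1 (fun y => ∑ e, q e y * w e) (fun y => ∑ e, q e y * w' e) ≤ K * l1 w w' := by
  set δ : E → ℝ := fun e => w e - w' e
  set z : F → ℝ := fun y => ∑ e, q e y * δ e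
  -- test `z` against its own sign pattern `s`, which turns the `ℓ¹` norm into a scalar pairing
  set s : F → ℝ := fun y => SignType.sign (z y)
  set v : E → ℝ := fun e => ∑ y, s y * q e y
  have hs : ∀ y, |s y| ≤ 1 := fun y => by
    simp only [s]; rcases SignType.sign (z y) with _ | _ | _ <;> simp
  have hv : ∀ e e', v e - v e' ≤ 2 * K := fun e e' =>
    calc v e - v e' = ∑ y, s y * (q e y - q e' y) := by simp only [v, mul_sub, sum_sub_distrib]
      _ ≤ ∑ y, |q e y - q e' y| := sum_le_sum fun y _ =>
          (le_abs_self _).trans (by rw [abs_mul]; exact mul_le_of_le_one_left (abs_nonneg _) (hs y))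
      _ ≤ 2 * K := hq e e'
  have hδ : ∑ e, δ e = 0 := by simp only [δ, sum_sub_distrib, hw, sub_self]
  calc l1 (fun y => ∑ e, q e y * w e) (fun y => ∑ e, q e y * w' e) = ∑ y, s y * z y := by
        refine sum_congr rfl fun y _ => ?_
        have hz : z y = ∑ e, q e y * w e - ∑ e, q e y * w' e := by
          simp only [z, δ, mul_sub, sum_sub_distrib]
        rw [← hz]
        exact (sign_mul_self _).symm
    _ = ∑ e, v e * δ e := by
        simp only [z, v, mul_sum, sum_mul]
        rw [sum_comm]
        exact sum_congr rfl fun e _ => sum_congr rfl fun y _ => by ring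
    _ ≤ K * ∑ e, |δ e| := (le_abs_self _).trans (abs_sum_mul_le_of_sub_le hv hδ)

end L1

lemma ind_self {E : Type*} [DecidableEq E] (x : E) : ind x x = 0 := if_pos rfl

lemma ind_le_one {E : Type*} [DecidableEq E] (x y : E) : ind x y ≤ 1 := by
  unfold ind; split <;> norm_num

section Kernel

variable {X A : Type*} [Fintype X] [Fintype A]

/-- The paper's `P(·|x,u,μ)`. -/
def mixKernel (p : X → A → (X → ℝ) → X → ℝ) (x : X) (u : A → ℝ) (μ : X → ℝ) : X → ℝ :=
  fun y => ∑ a, p x a μ y * u a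

/-- The state distribution `ν` moved one step by the policy `π`, with the mean field of the
kernel frozen at `μ`. -/
def stepDist (p : X → A → (X → ℝ) → X → ℝ) (π : X → A → ℝ) (μ ν : X → ℝ) : X → ℝ :=
  fun y => ∑ x, mixKernel p x (π x) μ y * ν x

variable [DecidableEq X] [DecidableEq A] {p : X → A → (X → ℝ) → X → ℝ} {K1 : ℝ}
  {μ μ' ν ν' : X → ℝ} {π π' : X → A → ℝ}

namespace KernelLip

lemma l1_le_of_state (hp : KernelLip p K1) (hK1 : 0 ≤ K1) (x x' : X) (a : A) (hμ : IsProb μ) :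
    l1 (p x a μ) (p x' a μ) ≤ K1 := by
  have h := hp x x' a a μ μ hμ hμ
  simp only [ind_self, l1_self, mul_zero, add_zero] at h
  linarith [mul_le_mul_of_nonneg_left (ind_le_one x x') hK1]

lemma l1_le_of_action (hp : KernelLip p K1) (hK1 : 0 ≤ K1) (x : X) (a a' : A) (hμ : IsProb μ) :
    l1 (p x a μ) (p x a' μ) ≤ 2 * K1 := by
  have h := hp x x a a' μ μ hμ hμ
  simp only [ind_self, l1_self, zero_add, add_zero] at h
  linarith [mul_le_mul_of_nonneg_left (ind_le_one a a') hK1]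

lemma l1_le_of_meanField (hp : KernelLip p K1) (x : X) (a : A) (hμ : IsProb μ)
    (hμ' : IsProb μ') : l1 (p x a μ) (p x a μ') ≤ K1 * l1 μ μ' := by
  simpa [ind_self] using hp x x a a μ μ' hμ hμ'

lemma l1_mixKernel_le_of_state (hp : KernelLip p K1) (hK1 : 0 ≤ K1) (x x' : X) {u : A → ℝ}
    (hu : IsProb u) (hμ : IsProb μ) : l1 (mixKernel p x u μ) (mixKernel p x' u μ) ≤ K1 :=
  l1_mixture_le hu fun a => hp.l1_le_of_state hK1 x x' a hμ

lemma l1_mixKernel_le_of_action (hp : KernelLip p K1) (hK1 : 0 ≤ K1) (x : X) {u u' : A → ℝ}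
    (hu : IsProb u) (hu' : IsProb u') (hμ : IsProb μ) :
    l1 (mixKernel p x u μ) (mixKernel p x u' μ) ≤ K1 * l1 u u' :=
  l1_mixture_le_mul_l1 (fun a a' => hp.l1_le_of_action hK1 x a a' hμ) (hu.2.trans hu'.2.symm)

lemma l1_mixKernel_le_of_meanField (hp : KernelLip p K1) (x : X) {u : A → ℝ} (hu : IsProb u)
    (hμ : IsProb μ) (hμ' : IsProb μ') :
    l1 (mixKernel p x u μ) (mixKernel p x u μ') ≤ K1 * l1 μ μ' :=
  l1_mixture_le hu fun a => hp.l1_le_of_meanField x a hμ hμ'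

lemma l1_stepDist_le_of_policy (hp : KernelLip p K1) (hK1 : 0 ≤ K1) {ε : ℝ}
    (hπ : ∀ x, IsProb (π x)) (hπ' : ∀ x, IsProb (π' x)) (hε : ∀ x, l1 (π x) (π' x) ≤ ε)
    (hμ : IsProb μ) (hν : IsProb ν) : l1 (stepDist p π μ ν) (stepDist p π' μ ν) ≤ K1 * ε :=
  l1_mixture_le hν fun x => (hp.l1_mixKernel_le_of_action hK1 x (hπ x) (hπ' x) hμ).trans
    (mul_le_mul_of_nonneg_left (hε x) hK1)

lemma l1_stepDist_le_of_meanField (hp : KernelLip p K1) (hπ : ∀ x, IsProb (π x))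
    (hμ : IsProb μ) (hμ' : IsProb μ') (hν : IsProb ν) :
    l1 (stepDist p π μ ν) (stepDist p π μ' ν) ≤ K1 * l1 μ μ' :=
  l1_mixture_le hν fun x => hp.l1_mixKernel_le_of_meanField x (hπ x) hμ hμ'

lemma l1_stepDist_le_of_dist (hp : KernelLip p K1) (hK1 : 0 ≤ K1) {Lπ : ℝ}
    (hπ : ∀ x, IsProb (π x)) (hLip : ∀ x x', l1 (π x) (π x') ≤ Lπ) (hμ : IsProb μ)
    (hν : IsProb ν) (hν' : IsProb ν') :
    l1 (stepDist p π μ ν) (stepDist p π μ ν') ≤ (K1 + K1 * Lπ) / 2 * l1 ν ν' := by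
  refine l1_mixture_le_mul_l1 (fun x x' => ?_) (hν.2.trans hν'.2.symm)
  calc l1 (mixKernel p x (π x) μ) (mixKernel p x' (π x') μ)
      ≤ l1 (mixKernel p x (π x) μ) (mixKernel p x' (π x) μ)
        + l1 (mixKernel p x' (π x) μ) (mixKernel p x' (π x') μ) := l1_triangle _ _ _
    _ ≤ K1 + K1 * Lπ := add_le_add (hp.l1_mixKernel_le_of_state hK1 x x' (hπ x) hμ)
        ((hp.l1_mixKernel_le_of_action hK1 x' (hπ x) (hπ x') hμ).trans
          (mul_le_mul_of_nonneg_left (hLip x x') hK1))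
    _ = 2 * ((K1 + K1 * Lπ) / 2) := by ring

lemma l1_le_of_stepDist_eq (hp : KernelLip p K1) (hK1 : 0 ≤ K1) {ε Lπ : ℝ}
    (hπ : ∀ x, IsProb (π x)) (hπ' : ∀ x, IsProb (π' x)) (hε : ∀ x, l1 (π' x) (π x) ≤ ε)
    (hLip : ∀ x x', l1 (π x) (π x') ≤ Lπ) (hμ : IsProb μ) (hμ' : IsProb μ')
    (hfix : stepDist p π μ μ = μ) (hfix' : stepDist p π' μ' μ' = μ') :
    l1 μ' μ ≤ K1 * ε + K1 * l1 μ' μ + (K1 + K1 * Lπ) / 2 * l1 μ' μ := by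
  calc l1 μ' μ = l1 (stepDist p π' μ' μ') (stepDist p π μ μ) := by rw [hfix, hfix']
    _ ≤ l1 (stepDist p π' μ' μ') (stepDist p π μ' μ') + l1 (stepDist p π μ' μ') (stepDist p π μ μ')
        + l1 (stepDist p π μ μ') (stepDist p π μ μ) := by
      linarith [l1_triangle (stepDist p π' μ' μ') (stepDist p π μ' μ') (stepDist p π μ μ),
        l1_triangle (stepDist p π μ' μ') (stepDist p π μ μ') (stepDist p π μ μ)]
    _ ≤ _ := add_le_add_three (hp.l1_stepDist_le_of_policy hK1 hπ' hπ hε hμ' hμ')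
        (hp.l1_stepDist_le_of_meanField hπ hμ' hμ hμ')
        (hp.l1_stepDist_le_of_dist hK1 hπ hLip hμ hμ' hμ)

end KernelLip
end Kernel

lemma nonpos_of_forall_le_mul {x k : ℝ} (h : ∀ t : ℝ, 0 < t → t ≤ 1 → x ≤ t * k) : x ≤ 0 := by
  have hlim : Tendsto (fun t : ℝ => t * k) (𝓝 0) (𝓝 0) := by
    simpa using (continuous_mul_const k).tendsto 0
  exact ge_of_tendsto (hlim.mono_left nhdsWithin_le_nhds)
    (eventually_of_mem (Ioc_mem_nhdsGT one_pos) fun t ht => h t ht.1 ht.2)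

section RegularizedArgmax

variable {A : Type*} [Fintype A] {Ω : (A → ℝ) → ℝ} {DΩ : (A → ℝ) → A → ℝ} {ρ : ℝ}

/-- The shape of `Q^{reg,*}_μ(x, ·)` once the continuation values are fixed. -/
def regularizedValue (Ω : (A → ℝ) → ℝ) (c u : A → ℝ) : ℝ :=
  ∑ a, c a * u a - Ω u

namespace StrongConvex

lemma convexComb_le (hΩ : StrongConvex Ω DΩ ρ) {u v : A → ℝ} (hu : IsProb u) (hv : IsProb v)
    {t : ℝ} (ht0 : 0 ≤ t) (ht1 : t ≤ 1) :
    Ω (fun a => (1 - t) * u a + t * v a) + ρ / 2 * (t * (1 - t)) * l1 u v ^ 2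
      ≤ (1 - t) * Ω u + t * Ω v := by
  set w : A → ℝ := fun a => (1 - t) * u a + t * v a
  have hw : IsProb w := hu.convexComb hv ht0 ht1
  have hwu : l1 w u = t * l1 u v := by
    rw [l1, l1, mul_sum]
    refine sum_congr rfl fun a _ => ?_
    rw [show w a - u a = t * (v a - u a) by simp only [w]; ring, abs_mul, abs_of_nonneg ht0,
      abs_sub_comm]
  have hwv : l1 w v = (1 - t) * l1 u v := by
    rw [l1, l1, mul_sum]
    refine sum_congr rfl fun a _ => ?_
    rw [show w a - v a = (1 - t) * (u a - v a) by simp only [w]; ring, abs_mul,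
      abs_of_nonneg (sub_nonneg.2 ht1)]
  -- the first-order terms at `w` cancel in the convex combination
  have hgrad : (1 - t) * ∑ a, DΩ w a * (u a - w a) + t * ∑ a, DΩ w a * (v a - w a) = 0 := by
    rw [mul_sum, mul_sum, ← sum_add_distrib]
    exact sum_eq_zero fun a _ => by simp only [w]; ring
  have hu' := mul_le_mul_of_nonneg_left (hΩ w u hw hu) (sub_nonneg.2 ht1)
  have hv' := mul_le_mul_of_nonneg_left (hΩ w v hw hv) ht0
  rw [hwu] at hu'
  rw [hwv] at hv'
  linarith

lemma regularizedValue_add_sq_le (hΩ : StrongConvex Ω DΩ ρ) {c f : A → ℝ} (hf : IsProb f)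
    (hmax : ∀ u, IsProb u → regularizedValue Ω c u ≤ regularizedValue Ω c f) {u : A → ℝ}
    (hu : IsProb u) : regularizedValue Ω c u + ρ / 2 * l1 u f ^ 2 ≤ regularizedValue Ω c f := by
  suffices h : regularizedValue Ω c u + ρ / 2 * l1 u f ^ 2 - regularizedValue Ω c f ≤ 0 by
    linarith
  refine nonpos_of_forall_le_mul (k := ρ / 2 * l1 u f ^ 2) fun t ht0 ht1 => ?_
  have hconv := hΩ.convexComb_le hf hu ht0.le ht1
  have hopt := hmax _ (hf.convexComb hu ht0.le ht1)
  have hlin : ∑ a, c a * ((1 - t) * f a + t * u a)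
      = (1 - t) * ∑ a, c a * f a + t * ∑ a, c a * u a := by
    rw [mul_sum, mul_sum, ← sum_add_distrib]
    exact sum_congr rfl fun a _ => by ring
  rw [regularizedValue, hlin] at hopt
  rw [l1_comm] at hconv
  have key : t * (regularizedValue Ω c u + ρ / 2 * (1 - t) * l1 u f ^ 2 - regularizedValue Ω c f)
      ≤ 0 := by
    simp only [regularizedValue] at hopt ⊢
    linarith
  linarith [nonpos_of_mul_nonpos_right key ht0]

lemma mul_l1_le_of_isMax (hΩ : StrongConvex Ω DΩ ρ) {c c' f f' : A → ℝ}
    (hf : IsProb f) (hf' : IsProb f')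
    (hmax : ∀ u, IsProb u → regularizedValue Ω c u ≤ regularizedValue Ω c f)
    (hmax' : ∀ u, IsProb u → regularizedValue Ω c' u ≤ regularizedValue Ω c' f')
    {M : ℝ} (hc : ∀ a, |c a - c' a| ≤ M) : ρ * l1 f f' ≤ M := by
  have := hf.nonempty
  have hM : 0 ≤ M := (abs_nonneg _).trans (hc (Classical.arbitrary A))
  have h := hΩ.regularizedValue_add_sq_le hf hmax hf'
  have h' := hΩ.regularizedValue_add_sq_le hf' hmax' hf
  rw [l1_comm] at h
  have hpair : ρ * l1 f f' ^ 2 ≤ ∑ a, (c a - c' a) * (f a - f' a) := by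
    simp only [regularizedValue] at h h'
    have : ∑ a, (c a - c' a) * (f a - f' a)
        = ∑ a, c a * f a - ∑ a, c a * f' a - (∑ a, c' a * f a - ∑ a, c' a * f' a) := by
      simp only [← sum_sub_distrib]
      exact sum_congr rfl fun a _ => by ring
    linarith
  have hbound : ∑ a, (c a - c' a) * (f a - f' a) ≤ M * l1 f f' := by
    rw [l1, mul_sum]
    refine sum_le_sum fun a _ => (le_abs_self _).trans ?_
    rw [abs_mul]
    exact mul_le_mul_of_nonneg_right (hc a) (abs_nonneg _)
  rcases (l1_nonneg f f').eq_or_lt with h0 | hpos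
  · rw [← h0, mul_zero]; exact hM
  · nlinarith

end StrongConvex
end RegularizedArgmax

lemma RewardLip.abs_sub_le_of_state {X A : Type*} [Fintype X] [Fintype A] [DecidableEq X]
    [DecidableEq A] {r : X → A → (X → ℝ) → ℝ} {L1 : ℝ} (hr : RewardLip r L1) (hL1 : 0 ≤ L1)
    (x x' : X) (a : A) {μ : X → ℝ} (hμ : IsProb μ) : |r x a μ - r x' a μ| ≤ L1 := by
  have h := hr x x' a a μ μ hμ hμ
  simp only [ind_self, l1_self, mul_zero, add_zero] at h
  linarith [mul_le_mul_of_nonneg_left (ind_le_one x x') hL1]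

lemma Qmax_eq_of_isMax {X A : Type*} [Fintype A] {Q : X → (A → ℝ) → ℝ} {y : X} {f : A → ℝ}
    (hf : IsProb f) (hmax : ∀ u, IsProb u → Q y u ≤ Q y f) : Qmax Q y = Q y f := by
  have : Nonempty {w : A → ℝ // IsProb w} := ⟨⟨f, hf⟩⟩
  exact le_antisymm (ciSup_le fun u => hmax u.1 u.2)
    (le_ciSup (f := fun u : {w : A → ℝ // IsProb w} => Q y u.1)
      ⟨Q y f, by rintro _ ⟨u, rfl⟩; exact hmax u.1 u.2⟩ ⟨f, hf⟩)

section Bellman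

variable {X A : Type*} [Fintype X] [Fintype A] {r : X → A → (X → ℝ) → ℝ}
  {p : X → A → (X → ℝ) → X → ℝ} {Ω : (A → ℝ) → ℝ} {β : ℝ} {μ : X → ℝ}
  {Q : X → (A → ℝ) → ℝ} {π : X → A → ℝ}

/-- `Q(x, u) = ⟨qCoef V x, u⟩ - Ω(u)` for a fixed point `Q` of `L_μ` with value function `V`. -/
def qCoef (r : X → A → (X → ℝ) → ℝ) (p : X → A → (X → ℝ) → X → ℝ) (β : ℝ) (μ V : X → ℝ)
    (x : X) (a : A) : ℝ :=
  r x a μ + β * ∑ y, V y * p x a μ y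

lemma Lbell_eq_regularizedValue (x : X) (u : A → ℝ) :
    Lbell r p Ω β μ Q x u = regularizedValue Ω (qCoef r p β μ (Qmax Q) x) u := by
  have hswap : ∑ y, Qmax Q y * ∑ a, p x a μ y * u a
      = ∑ a, (∑ y, Qmax Q y * p x a μ y) * u a := by
    simp only [mul_sum, sum_mul]
    rw [sum_comm]
    exact sum_congr rfl fun _ _ => sum_congr rfl fun _ _ => by ring
  rw [Lbell, regularizedValue, hswap]
  simp only [qCoef, add_mul, sum_add_distrib, mul_assoc, ← mul_sum]
  ring

lemma BddFixedPoint.eq_regularizedValue (hQ : BddFixedPoint r p Ω β μ Q)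
    (hπ : ∀ x, IsProb (π x)) (hmax : ∀ x u, IsProb u → Q x u ≤ Q x (π x)) (x : X)
    {u : A → ℝ} (hu : IsProb u) :
    Q x u = regularizedValue Ω (qCoef r p β μ (fun y => Q y (π y)) x) u := by
  have hV : Qmax Q = fun y => Q y (π y) := funext fun y => Qmax_eq_of_isMax (hπ y) (hmax y)
  rw [hQ.2 x u hu, Lbell_eq_regularizedValue, hV]

variable [DecidableEq X] [DecidableEq A] {L1 K1 : ℝ}

lemma qCoef_sub_le (hr : RewardLip r L1) (hL1 : 0 ≤ L1) (hp_prob : IsKernel p)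
    (hp : KernelLip p K1) (hK1 : 0 ≤ K1) (hβ : 0 ≤ β) (hμ : IsProb μ) {V : X → ℝ} {S : ℝ}
    (hV : ∀ y y', V y - V y' ≤ S) (x x' : X) (a : A) :
    |qCoef r p β μ V x a - qCoef r p β μ V x' a| ≤ L1 + β * K1 / 2 * S := by
  have hS : 0 ≤ S := by simpa using hV x x
  have hcont : |∑ y, V y * (p x a μ y - p x' a μ y)| ≤ S / 2 * K1 :=
    (abs_sum_mul_le_of_sub_le (fun y y' => by linarith [hV y y'])
      ((hp_prob x a μ hμ).sum_sub_eq_zero (hp_prob x' a μ hμ))).trans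
      (mul_le_mul_of_nonneg_left (hp.l1_le_of_state hK1 x x' a hμ) (by positivity))
  have hsplit : qCoef r p β μ V x a - qCoef r p β μ V x' a
      = (r x a μ - r x' a μ) + β * ∑ y, V y * (p x a μ y - p x' a μ y) := by
    simp only [qCoef, mul_sub, sum_sub_distrib]
    ring
  calc |qCoef r p β μ V x a - qCoef r p β μ V x' a|
      ≤ |r x a μ - r x' a μ| + β * |∑ y, V y * (p x a μ y - p x' a μ y)| := by
        rw [hsplit]
        exact (abs_add_le _ _).trans_eq (by rw [abs_mul, abs_of_nonneg hβ])
    _ ≤ L1 + β * (S / 2 * K1) :=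
        add_le_add (hr.abs_sub_le_of_state hL1 x x' a hμ) (mul_le_mul_of_nonneg_left hcont hβ)
    _ = L1 + β * K1 / 2 * S := by ring

lemma BddFixedPoint.value_sub_le (hQ : BddFixedPoint r p Ω β μ Q) (hr : RewardLip r L1)
    (hL1 : 0 ≤ L1) (hp_prob : IsKernel p) (hp : KernelLip p K1) (hK1 : 0 ≤ K1) (hβ : 0 ≤ β)
    (hβK : β * K1 / 2 < 1) (hμ : IsProb μ) (hπ : ∀ x, IsProb (π x))
    (hmax : ∀ x u, IsProb u → Q x u ≤ Q x (π x)) (y y' : X) :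
    Q y (π y) - Q y' (π y') ≤ L1 / (1 - β * K1 / 2) := by
  set V : X → ℝ := fun y => Q y (π y)
  have hrep := hQ.eq_regularizedValue hπ hmax
  obtain ⟨ymax, -, hymax⟩ := exists_max_image univ V ⟨y, mem_univ y⟩
  obtain ⟨ymin, -, hymin⟩ := exists_min_image univ V ⟨y, mem_univ y⟩
  set S := V ymax - V ymin
  have hVS : ∀ z z', V z - V z' ≤ S := fun z z' => by
    linarith [hymax z (mem_univ _), hymin z' (mem_univ _)]
  have hstep : ∀ z z', V z - V z' ≤ L1 + β * K1 / 2 * S := fun z z' =>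
    calc V z - V z' ≤ Q z (π z) - Q z' (π z) := by linarith [hmax z' (π z) (hπ z)]
      _ = ∑ a, (qCoef r p β μ V z a - qCoef r p β μ V z' a) * π z a := by
        rw [hrep z (hπ z), hrep z' (hπ z)]
        simp only [regularizedValue, sub_mul, sum_sub_distrib]
        ring
      _ ≤ ∑ a, (L1 + β * K1 / 2 * S) * π z a := sum_le_sum fun a _ =>
        mul_le_mul_of_nonneg_right ((le_abs_self _).trans
          (qCoef_sub_le hr hL1 hp_prob hp hK1 hβ hμ hVS z z' a)) ((hπ z).1 a)
      _ = L1 + β * K1 / 2 * S := by rw [← mul_sum, (hπ z).2, mul_one]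
  have hS : S ≤ L1 / (1 - β * K1 / 2) := by
    rw [le_div_iff₀ (by linarith)]
    linarith [hstep ymax ymin]
  exact (hVS y y').trans hS

lemma BddFixedPoint.mul_l1_le (hQ : BddFixedPoint r p Ω β μ Q) (hr : RewardLip r L1)
    (hL1 : 0 ≤ L1) (hp_prob : IsKernel p) (hp : KernelLip p K1) (hK1 : 0 ≤ K1) (hβ : 0 ≤ β)
    (hβK : β * K1 / 2 < 1) (hμ : IsProb μ) {DΩ : (A → ℝ) → A → ℝ} {ρ : ℝ}
    (hΩ : StrongConvex Ω DΩ ρ) (hπ : ∀ x, IsProb (π x))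
    (hmax : ∀ x u, IsProb u → Q x u ≤ Q x (π x)) (x x' : X) :
    ρ * l1 (π x) (π x') ≤ L1 / (1 - β * K1 / 2) := by
  have hrep := hQ.eq_regularizedValue hπ hmax
  have hmax' : ∀ z u, IsProb u → regularizedValue Ω (qCoef r p β μ (fun y => Q y (π y)) z) u
      ≤ regularizedValue Ω (qCoef r p β μ (fun y => Q y (π y)) z) (π z) := fun z u hu => by
    rw [← hrep z hu, ← hrep z (hπ z)]
    exact hmax z u hu
  refine hΩ.mul_l1_le_of_isMax (hπ x) (hπ x') (hmax' x) (hmax' x') fun a => ?_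
  calc _ ≤ L1 + β * K1 / 2 * (L1 / (1 - β * K1 / 2)) :=
        qCoef_sub_le hr hL1 hp_prob hp hK1 hβ hμ
          (hQ.value_sub_le hr hL1 hp_prob hp hK1 hβ hβK hμ hπ hmax) x x' a
    _ = L1 / (1 - β * K1 / 2) := by
        linear_combination -div_mul_cancel₀ L1 (by linarith : (1 - β * K1 / 2) ≠ 0)

end Bellman

theorem statement11_general {X A : Type*} [Fintype X] [Fintype A]
    [DecidableEq X] [DecidableEq A]
    (r : X → A → (X → ℝ) → ℝ) (p : X → A → (X → ℝ) → X → ℝ)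
    (L1 K1 : ℝ) (hL1 : 0 ≤ L1) (hK1 : 0 ≤ K1)
    (hr : RewardLip r L1)
    (hp_prob : IsKernel p) (hp : KernelLip p K1)
    (Ω : (A → ℝ) → ℝ) (DΩ : (A → ℝ) → (A → ℝ)) (ρ : ℝ) (hρ : 0 < ρ)
    (hΩ : StrongConvex Ω DΩ ρ)
    (β : ℝ) (hβ0 : 0 < β) (hβ1 : β < 1) (hβK : β * K1 / 2 < 1)
    -- Assumption 2: K_H < 1
    (hKH : (3 * K1 / 2) * (1 + ((L1 / (1 - β * K1 / 2)) / (1 - β)) / ρ) < 1)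
    -- μ* and π* = f_{μ*}: μ* is the fixed point of the MFE operator H
    (μstar : X → ℝ) (hμstar : IsProb μstar)
    (Qstar : X → (A → ℝ) → ℝ) (hQstar : BddFixedPoint r p Ω β μstar Qstar)
    (πstar : X → A → ℝ) (hπstar : ∀ x, IsProb (πstar x))
    (hπstarmax : ∀ x u, IsProb u → Qstar x u ≤ Qstar x (πstar x))
    (hfix : ∀ y, μstar y = ∑ x, (∑ a, p x a μstar y * πstar x a) * μstar x)
    -- the ε-approximating policy and an invariant distribution for it
    (ε : ℝ)
    (πeps : X → A → ℝ) (hπeps : ∀ x, IsProb (πeps x))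
    (hclose : ∀ x, l1 (πeps x) (πstar x) ≤ ε)
    (μeps : X → ℝ) (hμeps : IsProb μeps)
    (hinv : ∀ y, μeps y = ∑ x, (∑ a, p x a μeps y * πeps x a) * μeps x) :
    l1 μeps μstar ≤
      K1 * ε /
        (1 - (3 * K1 / 2 + K1 * ((L1 / (1 - β * K1 / 2)) / (1 - β)) / (2 * ρ))) := by
  set KH1 := L1 / (1 - β * K1 / 2) / (1 - β)
  have hQL : 0 ≤ L1 / (1 - β * K1 / 2) := div_nonneg hL1 (by linarith)
  have hKH1 : 0 ≤ KH1 := div_nonneg hQL (by linarith)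
  have hπLip : ∀ x x', l1 (πstar x) (πstar x') ≤ KH1 / ρ := fun x x' => by
    rw [le_div_iff₀ hρ, mul_comm]
    exact (hQstar.mul_l1_le hr hL1 hp_prob hp hK1 hβ0.le hβK hμstar hΩ hπstar hπstarmax x x').trans
      (le_div_self hQL (by linarith) (by linarith))
  have hD := hp.l1_le_of_stepDist_eq hK1 hπstar hπeps hclose hπLip hμstar hμeps
    (funext fun y => (hfix y).symm) (funext fun y => (hinv y).symm)
  have hC1 : 3 * K1 / 2 + K1 * KH1 / (2 * ρ) < 1 := by
    have : 0 ≤ K1 * KH1 / ρ := by positivity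
    linear_combination hKH + this
  rw [le_div_iff₀ (by linarith)]
  linear_combination hD

/-- key estimate in the proof of Theorem 1:
`‖μ_ε - μ*‖₁ ≤ K1 ε / (1 - C1)` with `C1 = 3K1/2 + K1 K_{H1}/(2ρ)`. -/
theorem statement11 {X A : Type*} [Fintype X] [Fintype A] [Nonempty X] [Nonempty A]
    [DecidableEq X] [DecidableEq A]
    (r : X → A → (X → ℝ) → ℝ) (p : X → A → (X → ℝ) → X → ℝ)
    (L1 K1 : ℝ) (hL1 : 0 ≤ L1) (hK1 : 0 ≤ K1)
    (hr_nonneg : RewardNonneg r) (hr : RewardLip r L1)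
    (hp_prob : IsKernel p) (hp : KernelLip p K1)
    (Ω : (A → ℝ) → ℝ) (DΩ : (A → ℝ) → (A → ℝ)) (ρ : ℝ) (hρ : 0 < ρ)
    (hΩ : StrongConvex Ω DΩ ρ)
    (β : ℝ) (hβ0 : 0 < β) (hβ1 : β < 1) (hβK : β * K1 / 2 < 1)
    -- Assumption 2: K_H < 1
    (hKH : (3 * K1 / 2) * (1 + ((L1 / (1 - β * K1 / 2)) / (1 - β)) / ρ) < 1)
    -- μ* and π* = f_{μ*}: μ* is the fixed point of the MFE operator H
    (μstar : X → ℝ) (hμstar : IsProb μstar)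
    (Qstar : X → (A → ℝ) → ℝ) (hQstar : BddFixedPoint r p Ω β μstar Qstar)
    (πstar : X → A → ℝ) (hπstar : ∀ x, IsProb (πstar x))
    (hπstarmax : ∀ x u, IsProb u → Qstar x u ≤ Qstar x (πstar x))
    (hfix : ∀ y, μstar y = ∑ x, (∑ a, p x a μstar y * πstar x a) * μstar x)
    -- the ε-approximating policy and an invariant distribution for it
    (ε : ℝ) (hε : 0 < ε)
    (πeps : X → A → ℝ) (hπeps : ∀ x, IsProb (πeps x))
    (hclose : ∀ x, l1 (πeps x) (πstar x) ≤ ε)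
    (μeps : X → ℝ) (hμeps : IsProb μeps)
    (hinv : ∀ y, μeps y = ∑ x, (∑ a, p x a μeps y * πeps x a) * μeps x) :
    l1 μeps μstar ≤
      K1 * ε /
        (1 - (3 * K1 / 2 + K1 * ((L1 / (1 - β * K1 / 2)) / (1 - β)) / (2 * ρ))) :=
  statement11_general r p L1 K1 hL1 hK1 hr hp_prob hp Ω DΩ ρ hρ hΩ β hβ0 hβ1 hβK hKH μstar hμstar
    Qstar hQstar πstar hπstar hπstarmax hfix ε πeps hπeps hclose μeps hμeps hinv

end MFG
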